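/- arXiv:1909.07496 — 5 statements merged into one kernel-verified Lean document; each statement's English description precedes it below -/
import Mathlib

section
/- Let f₀, β : EuclideanSpace ℝ (Fin 2) → ℝ be differentiable at a point p, and let k > 0 be a real number. Assume f₀(p) > 0 and f₀(p)^k + β(p) > 0. Then the Rimon–Koditschek potential φ(q) = f₀(q) / (f₀(q)^k + β(q))^(1/k) is differentiable at p and its gradient satisfies ∇φ(p) = (f₀(p)^k + β(p))^(−1−1/k) · ( β(p)·∇f₀(p) − (f₀(p)/k)·∇β(p) ). -/
set_option maxHeartbeats 1000000

open InnerProductSpace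

/-- Gradient of the Rimon–Koditschek potential
`φ(q) = f₀(q) / (f₀(q)^k + β(q))^(1/k)` at a point `p` where `f₀(p) > 0` and
`f₀(p)^k + β(p) > 0`:
`∇φ(p) = (f₀(p)^k + β(p))^(-1-1/k) • (β(p) • ∇f₀(p) - (f₀(p)/k) • ∇β(p))`. -/
theorem rimon_koditschek_gradient
    (f₀ β : EuclideanSpace ℝ (Fin 2) → ℝ) (p : EuclideanSpace ℝ (Fin 2)) (k : ℝ)
    (hk : 0 < k)
    (hf₀ : DifferentiableAt ℝ f₀ p) (hβ : DifferentiableAt ℝ β p)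
    (hfpos : 0 < f₀ p) (hden : 0 < f₀ p ^ k + β p) :
    DifferentiableAt ℝ (fun q => f₀ q / (f₀ q ^ k + β q) ^ (1 / k)) p ∧
      gradient (fun q => f₀ q / (f₀ q ^ k + β q) ^ (1 / k)) p =
        (f₀ p ^ k + β p) ^ (-1 - 1 / k) •
          (β p • gradient f₀ p - (f₀ p / k) • gradient β p) := by
  set u : ℝ := f₀ p ^ k + β p with hu
  set Fd : EuclideanSpace ℝ (Fin 2) →L[ℝ] ℝ := fderiv ℝ f₀ p with hFd
  set Bd : EuclideanSpace ℝ (Fin 2) →L[ℝ] ℝ := fderiv ℝ β p with hBd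
  have h1 : HasFDerivAt (fun q => f₀ q ^ k + β q)
      ((k * f₀ p ^ (k - 1)) • Fd + Bd) p :=
    (hf₀.hasFDerivAt.rpow_const (Or.inl hfpos.ne')).add hβ.hasFDerivAt
  have h2 : HasFDerivAt (fun q => (f₀ q ^ k + β q) ^ (-(1 / k)))
      ((-(1 / k) * u ^ (-(1 / k) - 1)) • ((k * f₀ p ^ (k - 1)) • Fd + Bd)) p :=
    h1.rpow_const (Or.inl hden.ne')
  have h3 : HasFDerivAt (fun q => f₀ q * (f₀ q ^ k + β q) ^ (-(1 / k)))
      (f₀ p • ((-(1 / k) * u ^ (-(1 / k) - 1)) • ((k * f₀ p ^ (k - 1)) • Fd + Bd))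
        + (u ^ (-(1 / k))) • Fd) p :=
    hf₀.hasFDerivAt.mul h2
  have hcont : ContinuousAt (fun q => f₀ q ^ k + β q) p := h1.differentiableAt.continuousAt
  have hev : ∀ᶠ q in nhds p, 0 < f₀ q ^ k + β q := hcont (Ioi_mem_nhds hden)
  have heq : (fun q => f₀ q / (f₀ q ^ k + β q) ^ (1 / k)) =ᶠ[nhds p]
      (fun q => f₀ q * (f₀ q ^ k + β q) ^ (-(1 / k))) := by
    filter_upwards [hev] with q hq
    rw [Real.rpow_neg hq.le, div_eq_mul_inv]
  -- rewrite the derivative as a combination of Fd and Bd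
  have hcoef1 : u ^ (-(1 / k)) + f₀ p * (-(1 / k) * u ^ (-(1 / k) - 1)) * (k * f₀ p ^ (k - 1))
      = u ^ (-1 - 1 / k) * β p := by
    have ha : f₀ p * f₀ p ^ (k - 1) = f₀ p ^ k := by
      rw [Real.rpow_sub hfpos, Real.rpow_one]
      field_simp
    have hb : u ^ (-(1 / k) - 1) * u = u ^ (-(1 / k)) := by
      rw [← Real.rpow_add_one hden.ne']
      norm_num
    have hc : u ^ (-1 - 1 / k) = u ^ (-(1 / k) - 1) := by
      congr 1; ring
    have hβp : β p = u - f₀ p ^ k := by rw [hu]; ring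
    have hkk : (1 / k) * k = 1 := by field_simp
    rw [hc, hβp, ← hb]
    linear_combination (-(u ^ (-(1/k) - 1))) * ha +
      (-(u ^ (-(1/k) - 1) * f₀ p * f₀ p ^ (k - 1))) * hkk
  have hcoef2 : f₀ p * (-(1 / k) * u ^ (-(1 / k) - 1))
      = -(u ^ (-1 - 1 / k) * (f₀ p / k)) := by
    have hc : u ^ (-1 - 1 / k) = u ^ (-(1 / k) - 1) := by
      congr 1; ring
    rw [hc]; ring
  have hL : (f₀ p • ((-(1 / k) * u ^ (-(1 / k) - 1)) • ((k * f₀ p ^ (k - 1)) • Fd + Bd))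
        + (u ^ (-(1 / k))) • Fd)
      = (u ^ (-1 - 1 / k) * β p) • Fd + (-(u ^ (-1 - 1 / k) * (f₀ p / k))) • Bd := by
    rw [← hcoef1, ← hcoef2]
    module
  have hφ : HasFDerivAt (fun q => f₀ q / (f₀ q ^ k + β q) ^ (1 / k))
      ((u ^ (-1 - 1 / k) * β p) • Fd + (-(u ^ (-1 - 1 / k) * (f₀ p / k))) • Bd) p := by
    rw [← hL]
    exact h3.congr_of_eventuallyEq heq
  refine ⟨hφ.differentiableAt, ?_⟩
  have hg := hφ.hasGradientAt.gradient
  rw [hg]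
  simp only [map_add, map_smul]
  rw [show ((InnerProductSpace.toDual ℝ (EuclideanSpace ℝ (Fin 2))).symm Fd = gradient f₀ p) from rfl,
     show ((InnerProductSpace.toDual ℝ (EuclideanSpace ℝ (Fin 2))).symm Bd = gradient β p) from rfl]
  module
end

section
/- Let f₀, β : EuclideanSpace ℝ (Fin 2) → ℝ be differentiable at a point p, let k > 0 be a real number, and assume f₀(p) > 0 and β(p) = 0. Then the Rimon–Koditschek potential φ(q) = f₀(q)/(f₀(q)^k + β(q))^(1/k) is differentiable at p and ∇φ(p) = −(1/k) · f₀(p)^(−k) · ∇β(p). In particular, at boundary points of the obstacle region (where β vanishes) the gradient of φ is a negative multiple of the gradient of β. -/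
/-- At a boundary point of the obstacle region (where `β` vanishes),
the gradient of the Rimon–Koditschek potential `φ(q) = f₀(q)/(f₀(q)^k + β(q))^(1/k)`
is a negative multiple of the gradient of `β`:
`∇φ(p) = -(1/k) · f₀(p)^(-k) • ∇β(p)`. -/
theorem rimon_koditschek_gradient_on_boundary
    (f₀ β : EuclideanSpace ℝ (Fin 2) → ℝ) (p : EuclideanSpace ℝ (Fin 2)) (k : ℝ)
    (hk : 0 < k)
    (hf₀ : DifferentiableAt ℝ f₀ p) (hβ : DifferentiableAt ℝ β p)
    (hfpos : 0 < f₀ p) (hβ0 : β p = 0) :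
    DifferentiableAt ℝ (fun q => f₀ q / (f₀ q ^ k + β q) ^ (1 / k)) p ∧
      gradient (fun q => f₀ q / (f₀ q ^ k + β q) ^ (1 / k)) p =
        (-(1 / k) * f₀ p ^ (-k)) • gradient β p := by
  set F := fderiv ℝ f₀ p with hF
  set B := fderiv ℝ β p with hB
  have hgp : f₀ p ^ k + β p = f₀ p ^ k := by rw [hβ0, add_zero]
  have hgpos : 0 < f₀ p ^ k + β p := by rw [hgp]; exact Real.rpow_pos_of_pos hfpos k
  -- derivative of g = f₀^k + β
  have hg : HasFDerivAt (fun q => f₀ q ^ k + β q)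
      ((k * f₀ p ^ (k - 1)) • F + B) p :=
    (hf₀.hasFDerivAt.rpow_const (Or.inl hfpos.ne')).add hβ.hasFDerivAt
  -- derivative of g ^ (-(1/k))
  have hh : HasFDerivAt (fun q => (f₀ q ^ k + β q) ^ (-(1 / k)))
      ((-(1 / k) * (f₀ p ^ k + β p) ^ (-(1 / k) - 1)) • ((k * f₀ p ^ (k - 1)) • F + B)) p :=
    hg.rpow_const (Or.inl hgpos.ne')
  -- product rule
  have hmul : HasFDerivAt (fun q => f₀ q * (f₀ q ^ k + β q) ^ (-(1 / k)))
      (f₀ p • ((-(1 / k) * (f₀ p ^ k + β p) ^ (-(1 / k) - 1)) • ((k * f₀ p ^ (k - 1)) • F + B))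
        + ((f₀ p ^ k + β p) ^ (-(1 / k))) • F) p :=
    hf₀.hasFDerivAt.mul hh
  -- the original function agrees with the product form near `p`
  have hev : (fun q => f₀ q / (f₀ q ^ k + β q) ^ (1 / k))
      =ᶠ[nhds p] (fun q => f₀ q * (f₀ q ^ k + β q) ^ (-(1 / k))) := by
    have hc : ContinuousAt (fun q => f₀ q ^ k + β q) p := hg.continuousAt
    filter_upwards [hc.eventually (eventually_gt_nhds hgpos)] with q hq
    rw [Real.rpow_neg hq.le, div_eq_mul_inv]
  have hφ : HasFDerivAt (fun q => f₀ q / (f₀ q ^ k + β q) ^ (1 / k))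
      (f₀ p • ((-(1 / k) * (f₀ p ^ k + β p) ^ (-(1 / k) - 1)) • ((k * f₀ p ^ (k - 1)) • F + B))
        + ((f₀ p ^ k + β p) ^ (-(1 / k))) • F) p :=
    hmul.congr_of_eventuallyEq hev
  -- simplify the derivative
  have e1 : (f₀ p ^ k + β p) ^ (-(1 / k) - 1) = f₀ p ^ (-1 - k) := by
    rw [hgp, ← Real.rpow_mul hfpos.le]
    congr 1
    field_simp
  have e2 : (f₀ p ^ k + β p) ^ (-(1 / k)) = f₀ p ^ (-1 : ℝ) := by
    rw [hgp, ← Real.rpow_mul hfpos.le]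
    congr 1
    field_simp
  have m1 : f₀ p * f₀ p ^ (-1 - k) * f₀ p ^ (k - 1) = f₀ p ^ (-1 : ℝ) := by
    calc f₀ p * f₀ p ^ (-1 - k) * f₀ p ^ (k - 1)
        = f₀ p ^ (1 : ℝ) * f₀ p ^ (-1 - k) * f₀ p ^ (k - 1) := by rw [Real.rpow_one]
      _ = f₀ p ^ ((1 : ℝ) + (-1 - k) + (k - 1)) := by
          rw [← Real.rpow_add hfpos, ← Real.rpow_add hfpos]
      _ = f₀ p ^ (-1 : ℝ) := by congr 1; ring
  have m2 : f₀ p * f₀ p ^ (-1 - k) = f₀ p ^ (-k) := by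
    calc f₀ p * f₀ p ^ (-1 - k)
        = f₀ p ^ (1 : ℝ) * f₀ p ^ (-1 - k) := by rw [Real.rpow_one]
      _ = f₀ p ^ ((1 : ℝ) + (-1 - k)) := by rw [← Real.rpow_add hfpos]
      _ = f₀ p ^ (-k) := by congr 1; ring
  have hkk : 1 / k * k = 1 := one_div_mul_cancel hk.ne'
  have key : f₀ p • ((-(1 / k) * (f₀ p ^ k + β p) ^ (-(1 / k) - 1)) •
        ((k * f₀ p ^ (k - 1)) • F + B)) + ((f₀ p ^ k + β p) ^ (-(1 / k))) • F
      = (-(1 / k) * f₀ p ^ (-k)) • B := by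
    rw [e1, e2, smul_add, smul_smul, smul_add, smul_smul, smul_smul]
    have ha : f₀ p * (-(1 / k) * f₀ p ^ (-1 - k) * (k * f₀ p ^ (k - 1)))
        = -(f₀ p ^ (-1 : ℝ)) := by
      linear_combination (-(1 / k) * k) * m1 - (f₀ p ^ (-1 : ℝ)) * hkk
    have hb : f₀ p * (-(1 / k) * f₀ p ^ (-1 - k)) = -(1 / k) * f₀ p ^ (-k) := by
      linear_combination (-(1 / k)) * m2
    rw [ha, hb]
    module
  rw [key] at hφ
  refine ⟨hφ.differentiableAt, ?_⟩
  rw [gradient, gradient, hφ.fderiv, map_smul]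
end

section
/- Let f₀, β : EuclideanSpace ℝ (Fin 2) → ℝ be differentiable at a point p, let k > 0, and assume f₀(p) > 0, β(p) = 0, and ∇β(p) ≠ 0. Let φ(q) = f₀(q)/(f₀(q)^k + β(q))^(1/k) be the Rimon–Koditschek potential, and let α, ω, C, h > 0 be real constants. Then −(αωC/(2(h² + ω²))) · ⟨∇β(p), (I + (h/ω)·J)(∇φ(p))⟩ = (αωC · f₀(p)^(−k) / (2k(h² + ω²))) · ‖∇β(p)‖², and this quantity is strictly positive. -/
/-!
At a boundary point `β(p) = 0` the root `(f₀^k + β)^(1/k)` equals `f₀(p)` and has gradient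
`∇f₀ + (f₀^(1-k)/k) ∇β`, so in the quotient rule the `∇f₀` terms cancel and
`∇φ(p) = -(f₀(p)^(-k)/k) ∇β(p)`. Since `J` is a quarter turn, `⟨v, J v⟩ = 0`, so only the
identity part of `I + (h/ω) J` contributes, leaving a positive multiple of `‖∇β(p)‖²`.
-/

/-- The skew-symmetric rotation `J = [[0,1],[-1,0]]` on the plane: `J(v₁,v₂) = (v₂,-v₁)`. -/
noncomputable def Jmap (v : EuclideanSpace ℝ (Fin 2)) : EuclideanSpace ℝ (Fin 2) :=
  WithLp.toLp 2 ![v 1, -v 0]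

noncomputable def rimonKoditschek {E : Type*} (f β : E → ℝ) (k : ℝ) (q : E) : ℝ :=
  f q / (f q ^ k + β q) ^ (1 / k)

section Derivative

variable {E : Type*} [NormedAddCommGroup E] [NormedSpace ℝ E] {f β : E → ℝ}
  {f' β' : E →L[ℝ] ℝ} {p : E} {k : ℝ}

theorem hasFDerivAt_rpow_add_rpow_one_div (hf : HasFDerivAt f f' p) (hβ : HasFDerivAt β β' p)
    (hfpos : 0 < f p) (hβ0 : β p = 0) (hk : k ≠ 0) :
    HasFDerivAt (fun q => (f q ^ k + β q) ^ (1 / k)) (f' + (f p ^ (1 - k) / k) • β') p := by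
  have hgp : f p ^ k + β p = f p ^ k := by rw [hβ0, add_zero]
  have hg := (hf.rpow_const (p := k) (Or.inl hfpos.ne')).fun_add hβ
  have hu := hg.rpow_const (p := 1 / k) (Or.inl (by rw [hgp]; positivity))
  rw [hgp] at hu
  convert hu using 1
  set c := f p
  have hpow : (c ^ k) ^ (1 / k - 1) = c ^ (1 - k) := by
    rw [← Real.rpow_mul hfpos.le]
    congr 1
    field_simp
  have hcancel : c ^ (1 - k) * c ^ (k - 1) = 1 := by
    rw [← Real.rpow_add hfpos, sub_add_sub_cancel', sub_self, Real.rpow_zero]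
  rw [hpow, smul_add, smul_smul]
  match_scalars
  · rw [mul_mul_mul_comm, one_div_mul_cancel hk, one_mul, hcancel, mul_one]
  · ring

theorem hasFDerivAt_rimonKoditschek (hf : HasFDerivAt f f' p) (hβ : HasFDerivAt β β' p)
    (hfpos : 0 < f p) (hβ0 : β p = 0) (hk : k ≠ 0) :
    HasFDerivAt (rimonKoditschek f β k) (-(f p ^ (-k) / k) • β') p := by
  have hup : (f p ^ k + β p) ^ (1 / k) = f p := by
    rw [hβ0, add_zero, ← Real.rpow_mul hfpos.le, mul_one_div_cancel hk, Real.rpow_one]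
  have hinv := (hasDerivAt_inv (by rw [hup]; exact hfpos.ne')).comp_hasFDerivAt p
    (hasFDerivAt_rpow_add_rpow_one_div hf hβ hfpos hβ0 hk)
  refine (hf.mul hinv).congr_fderiv ?_
  simp only [Function.comp_apply, hup]
  set c := f p
  have hpow : c ^ (1 - k) = c * c ^ (-k) := by
    rw [sub_eq_add_neg, Real.rpow_add hfpos, Real.rpow_one]
  rw [hpow]
  match_scalars <;> field_simp
  ring

end Derivative

theorem gradient_rimonKoditschek {E : Type*} [NormedAddCommGroup E] [InnerProductSpace ℝ E]
    [CompleteSpace E] {f β : E → ℝ} {p : E} {k : ℝ} (hf : DifferentiableAt ℝ f p)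
    (hβ : DifferentiableAt ℝ β p) (hfpos : 0 < f p) (hβ0 : β p = 0) (hk : k ≠ 0) :
    gradient (rimonKoditschek f β k) p = -(f p ^ (-k) / k) • gradient β p := by
  refine HasGradientAt.gradient ?_
  rw [hasGradientAt_iff_hasFDerivAt, map_smul]
  exact hasFDerivAt_rimonKoditschek hf.hasFDerivAt hβ.hasGradientAt.hasFDerivAt hfpos hβ0 hk

theorem Jmap_smul (t : ℝ) (v : EuclideanSpace ℝ (Fin 2)) : Jmap (t • v) = t • Jmap v := by
  ext i
  fin_cases i <;> simp [Jmap]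

theorem inner_Jmap_right_eq_zero (v : EuclideanSpace ℝ (Fin 2)) : inner ℝ v (Jmap v) = 0 := by
  simp only [Jmap, PiLp.inner_apply, RCLike.inner_apply, Real.ringHom_apply, Fin.sum_univ_two,
    Matrix.cons_val_zero, Matrix.cons_val_one, Matrix.cons_val_fin_one]
  ring

theorem inner_add_smul_Jmap_self (v : EuclideanSpace ℝ (Fin 2)) (s : ℝ) :
    inner ℝ v (v + s • Jmap v) = ‖v‖ ^ 2 := by
  rw [inner_add_right, real_inner_smul_right, inner_Jmap_right_eq_zero, real_inner_self_eq_norm_sq]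
  ring

theorem beta_increases_on_boundary_general
    (f₀ β : EuclideanSpace ℝ (Fin 2) → ℝ) (p : EuclideanSpace ℝ (Fin 2))
    (k α ω C h : ℝ) (hk : 0 < k) (hα : 0 < α) (hω : 0 < ω) (hC : 0 < C)
    (hf₀ : DifferentiableAt ℝ f₀ p) (hβ : DifferentiableAt ℝ β p)
    (hfpos : 0 < f₀ p) (hβ0 : β p = 0) (hgradβ : gradient β p ≠ 0) :
    -(α * ω * C / (2 * (h ^ 2 + ω ^ 2))) *
        (inner ℝ (gradient β p)
          (gradient (fun q => f₀ q / (f₀ q ^ k + β q) ^ (1 / k)) p +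
            (h / ω) • Jmap (gradient (fun q => f₀ q / (f₀ q ^ k + β q) ^ (1 / k)) p)) : ℝ)
      = α * ω * C * f₀ p ^ (-k) / (2 * k * (h ^ 2 + ω ^ 2)) * ‖gradient β p‖ ^ 2 ∧
    0 < α * ω * C * f₀ p ^ (-k) / (2 * k * (h ^ 2 + ω ^ 2)) * ‖gradient β p‖ ^ 2 := by
  have hφ : gradient (fun q => f₀ q / (f₀ q ^ k + β q) ^ (1 / k)) p
      = -(f₀ p ^ (-k) / k) • gradient β p :=
    gradient_rimonKoditschek hf₀ hβ hfpos hβ0 hk.ne'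
  rw [hφ, Jmap_smul, smul_comm, ← smul_add, real_inner_smul_right, inner_add_smul_Jmap_self]
  have hgrad : 0 < ‖gradient β p‖ := norm_pos_iff.mpr hgradβ
  have hpow : 0 < f₀ p ^ (-k) := Real.rpow_pos_of_pos hfpos _
  exact ⟨by field_simp, by positivity⟩

/-- On the obstacle boundary (`β(p) = 0`), the averaged rate of change of
`β` along the perturbed gradient flow of the Rimon–Koditschek potential
`φ(q) = f₀(q)/(f₀(q)^k + β(q))^(1/k)` satisfies
`-(αωC/(2(h²+ω²))) ⟨∇β(p), (I + (h/ω)J) ∇φ(p)⟩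
    = (αωC f₀(p)^(-k)/(2k(h²+ω²))) ‖∇β(p)‖²`,
a strictly positive quantity. -/
theorem beta_increases_on_boundary
    (f₀ β : EuclideanSpace ℝ (Fin 2) → ℝ) (p : EuclideanSpace ℝ (Fin 2))
    (k α ω C h : ℝ) (hk : 0 < k) (hα : 0 < α) (hω : 0 < ω) (hC : 0 < C) (hh : 0 < h)
    (hf₀ : DifferentiableAt ℝ f₀ p) (hβ : DifferentiableAt ℝ β p)
    (hfpos : 0 < f₀ p) (hβ0 : β p = 0) (hgradβ : gradient β p ≠ 0) :
    -(α * ω * C / (2 * (h ^ 2 + ω ^ 2))) *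
        (inner ℝ (gradient β p)
          (gradient (fun q => f₀ q / (f₀ q ^ k + β q) ^ (1 / k)) p +
            (h / ω) • Jmap (gradient (fun q => f₀ q / (f₀ q ^ k + β q) ^ (1 / k)) p)) : ℝ)
      = α * ω * C * f₀ p ^ (-k) / (2 * k * (h ^ 2 + ω ^ 2)) * ‖gradient β p‖ ^ 2 ∧
    0 < α * ω * C * f₀ p ^ (-k) / (2 * k * (h ^ 2 + ω ^ 2)) * ‖gradient β p‖ ^ 2 :=
  beta_increases_on_boundary_general f₀ β p k α ω C h hk hα hω hC hf₀ hβ hfpos hβ0 hgradβ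
end

section
/- Let g : ℝ → ℝ be differentiable, with g(0) > 0, and suppose that for every t ≥ 0 with g(t) = 0 one has g'(t) > 0. Then g(t) > 0 for all t ≥ 0. -/
/-- **barrier lemma.** If `g : ℝ → ℝ` is differentiable, `g 0 > 0`, and
`g' t > 0` whenever `t ≥ 0` and `g t = 0`, then `g t > 0` for all `t ≥ 0`. -/
theorem barrier_lemma (g : ℝ → ℝ) (hg : Differentiable ℝ g) (h0 : 0 < g 0)
    (hbar : ∀ t, 0 ≤ t → g t = 0 → 0 < deriv g t) :
    ∀ t, 0 ≤ t → 0 < g t := by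
  by_contra h
  push_neg at h
  obtain ⟨t₀, ht₀, hgt₀⟩ := h
  set S : Set ℝ := {t | 0 ≤ t ∧ g t ≤ 0} with hS
  have hne : S.Nonempty := ⟨t₀, ht₀, hgt₀⟩
  have hbdd : BddBelow S := ⟨0, fun x hx => hx.1⟩
  have hclosed : IsClosed S := by
    have : S = Set.Ici (0:ℝ) ∩ g ⁻¹' Set.Iic 0 := by
      ext x; simp [hS, Set.mem_setOf_eq, and_comm]
    rw [this]
    exact isClosed_Ici.inter (isClosed_Iic.preimage hg.continuous)
  set T := sInf S with hT
  have hTmem : T ∈ S := hclosed.csInf_mem hne hbdd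
  have hT0 : 0 ≤ T := hTmem.1
  have hTpos : 0 < T := by
    rcases hT0.lt_or_eq with h | h
    · exact h
    · exfalso; rw [← h] at hTmem; exact absurd hTmem.2 (not_le.mpr h0)
  -- on [0, T), g > 0
  have hpos : ∀ t, 0 ≤ t → t < T → 0 < g t := by
    intro t ht htT
    by_contra hle
    push_neg at hle
    exact absurd (csInf_le hbdd ⟨ht, hle⟩) (not_le.mpr htT)
  -- g T = 0
  have hgT : g T = 0 := by
    refine le_antisymm hTmem.2 ?_
    have hlim : Filter.Tendsto g (nhdsWithin T (Set.Iio T)) (nhds (g T)) :=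
      (hg.continuous.continuousAt).continuousWithinAt.tendsto
    have hev : ∀ᶠ t in nhdsWithin T (Set.Iio T), 0 ≤ g t := by
      filter_upwards [Ioo_mem_nhdsLT_of_mem (by constructor <;> simp [hTpos] : T ∈ Set.Ioc 0 T)]
        with t ht
      exact (hpos t ht.1.le ht.2).le
    exact ge_of_tendsto hlim hev
  have hder : 0 < deriv g T := hbar T hT0 hgT
  -- slope tends to deriv g T
  have hslope : Filter.Tendsto (slope g T) (nhdsWithin T {T}ᶜ) (nhds (deriv g T)) :=
    hasDerivAt_iff_tendsto_slope.mp (hg T).hasDerivAt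
  have hev : ∀ᶠ t in nhdsWithin T {T}ᶜ, 0 < slope g T t :=
    hslope.eventually (eventually_gt_nhds hder)
  have hev' : ∀ᶠ t in nhdsWithin T (Set.Iio T), 0 < slope g T t :=
    hev.filter_mono (nhdsWithin_mono T (fun x hx => ne_of_lt hx))
  have hev2 : ∀ᶠ t in nhdsWithin T (Set.Iio T), 0 < t ∧ t < T :=
    Ioo_mem_nhdsLT_of_mem (by constructor <;> simp [hTpos] : T ∈ Set.Ioc 0 T)
  obtain ⟨t, hst, ht0, htT⟩ := (hev'.and hev2).exists
  -- slope positive with t < T gives g t < g T = 0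
  have : g t - g T < 0 := by
    have hden : t - T < 0 := sub_neg.mpr htT
    have := hst
    rw [slope_def_field, div_pos_iff] at this
    rcases this with ⟨h1, h2⟩ | ⟨h1, h2⟩
    · linarith
    · linarith
  rw [hgT] at this
  exact absurd (hpos t ht0.le htT) (by linarith)
end

section
/- Let h, ω > 0 and let g ∈ EuclideanSpace ℝ (Fin 2). Define z(τ) = (sin τ, −cos τ) and w(τ) = (cos τ, sin τ) in ℝ², and set η_g(τ) = (h/(h² + ω²)) · ( h·⟨g, z(τ)⟩ − ω·⟨g, w(τ)⟩ ). Then (1/(2π)) · ∫_{0}^{2π} ( ⟨g, z(τ)⟩ − η_g(τ) ) · z(τ) dτ = (ω/(2(h² + ω²))) · ( ω·g + h·J(g) ). -/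
/-- The vector of probing/demodulation signals `z(τ) = (sin τ, −cos τ)`. -/
noncomputable def zsig (τ : ℝ) : EuclideanSpace ℝ (Fin 2) :=
  WithLp.toLp 2 ![Real.sin τ, -Real.cos τ]

/-- The quadrature signal `w(τ) = (cos τ, sin τ)`. -/
noncomputable def wsig (τ : ℝ) : EuclideanSpace ℝ (Fin 2) :=
  WithLp.toLp 2 ![Real.cos τ, Real.sin τ]

open Real intervalIntegral

theorem EuclideanSpace.intervalIntegral_apply {ι : Type*} [Fintype ι] {f : ℝ → EuclideanSpace ℝ ι}
    {a b : ℝ} (hf : IntervalIntegrable f MeasureTheory.volume a b) (i : ι) :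
    (∫ τ in a..b, f τ) i = ∫ τ in a..b, f τ i :=
  ((EuclideanSpace.proj i).intervalIntegral_comp_comm hf).symm

theorem integral_quadratic_sin_cos_period (a p q r : ℝ) :
    ∫ τ in a..a + 2 * π, p * sin τ ^ 2 + q * (sin τ * cos τ) + r * cos τ ^ 2 = (p + r) * π := by
  have hcont : ∀ f : ℝ → ℝ, Continuous f → IntervalIntegrable f MeasureTheory.volume a (a + 2 * π) :=
    fun f hf => hf.intervalIntegrable _ _
  rw [integral_add (hcont _ (by fun_prop)) (hcont _ (by fun_prop)),
    integral_add (hcont _ (by fun_prop)) (hcont _ (by fun_prop)), integral_const_mul,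
    integral_const_mul, integral_const_mul, integral_sin_sq, integral_cos_sq,
    integral_sin_mul_cos₁, sin_add_two_pi, cos_add_two_pi]
  ring

@[fun_prop]
theorem continuous_zsig : Continuous zsig := by
  unfold zsig; fun_prop

@[fun_prop]
theorem continuous_wsig : Continuous wsig := by
  unfold wsig; fun_prop

theorem inner_zsig (g : EuclideanSpace ℝ (Fin 2)) (τ : ℝ) :
    inner ℝ g (zsig τ) = g 0 * sin τ - g 1 * cos τ := by
  simp [zsig, PiLp.inner_apply, Fin.sum_univ_two]
  ring

theorem inner_wsig (g : EuclideanSpace ℝ (Fin 2)) (τ : ℝ) :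
    inner ℝ g (wsig τ) = g 0 * cos τ + g 1 * sin τ := by
  simp [wsig, PiLp.inner_apply, Fin.sum_univ_two]
  ring

theorem integral_inner_zsig_smul_zsig (a : ℝ) (g : EuclideanSpace ℝ (Fin 2)) :
    ∫ τ in a..a + 2 * π, inner ℝ g (zsig τ) • zsig τ = π • g := by
  ext i
  rw [EuclideanSpace.intervalIntegral_apply (Continuous.intervalIntegrable (by fun_prop) _ _)]
  simp only [inner_zsig]
  fin_cases i
  · convert integral_quadratic_sin_cos_period a (g 0) (-g 1) 0 using 1
    · congr 1; ext τ; simp [zsig]; ring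
    · simp; ring
  · convert integral_quadratic_sin_cos_period a 0 (-g 0) (g 1) using 1
    · congr 1; ext τ; simp [zsig]; ring
    · simp; ring

theorem integral_inner_wsig_smul_zsig (a : ℝ) (g : EuclideanSpace ℝ (Fin 2)) :
    ∫ τ in a..a + 2 * π, inner ℝ g (wsig τ) • zsig τ = π • Jmap g := by
  ext i
  rw [EuclideanSpace.intervalIntegral_apply (Continuous.intervalIntegrable (by fun_prop) _ _)]
  simp only [inner_wsig]
  fin_cases i
  · convert integral_quadratic_sin_cos_period a (g 1) (g 0) 0 using 1
    · congr 1; ext τ; simp [zsig]; ring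
    · simp [Jmap]; ring
  · convert integral_quadratic_sin_cos_period a 0 (-g 1) (-g 0) using 1
    · congr 1; ext τ; simp [zsig]; ring
    · simp [Jmap]; ring

theorem averaged_extremum_seeking_field_general (h ω : ℝ) (hω : 0 < ω)
    (g : EuclideanSpace ℝ (Fin 2)) :
    (1 / (2 * Real.pi)) •
        ∫ τ in (0 : ℝ)..(2 * Real.pi),
          ((inner ℝ g (zsig τ) : ℝ) -
            h / (h ^ 2 + ω ^ 2) *
              (h * (inner ℝ g (zsig τ) : ℝ) - ω * (inner ℝ g (wsig τ) : ℝ))) • zsig τ =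
      (ω / (2 * (h ^ 2 + ω ^ 2))) • (ω • g + h • Jmap g) := by
  have hden : h ^ 2 + ω ^ 2 ≠ 0 := by positivity
  set c := h / (h ^ 2 + ω ^ 2)
  have hsplit : ∀ τ, (inner ℝ g (zsig τ) - c * (h * inner ℝ g (zsig τ) - ω * inner ℝ g (wsig τ)))
      • zsig τ = (1 - c * h) • (inner ℝ g (zsig τ) • zsig τ)
        + (c * ω) • (inner ℝ g (wsig τ) • zsig τ) := fun τ => by module
  have hz := integral_inner_zsig_smul_zsig 0 g
  have hw := integral_inner_wsig_smul_zsig 0 g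
  rw [zero_add] at hz hw
  simp_rw [hsplit]
  rw [integral_add (Continuous.intervalIntegrable (by fun_prop) _ _)
    (Continuous.intervalIntegrable (by fun_prop) _ _), integral_smul, integral_smul, hz, hw]
  match_scalars <;> (simp only [c]; field_simp)
  ring

/-- **averaging identity of the extremum-seeking loop.** For `h, ω > 0`
and `g ∈ ℝ²`, with `η_g(τ) = (h/(h²+ω²)) (h ⟨g, z(τ)⟩ − ω ⟨g, w(τ)⟩)` the steady-state
low-pass filter output, the average of the demodulated signal is
`(1/2π) ∫₀^{2π} (⟨g, z(τ)⟩ − η_g(τ)) z(τ) dτ = (ω/(2(h²+ω²))) (ω g + h J g)`. -/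
theorem averaged_extremum_seeking_field (h ω : ℝ) (hh : 0 < h) (hω : 0 < ω)
    (g : EuclideanSpace ℝ (Fin 2)) :
    (1 / (2 * Real.pi)) •
        ∫ τ in (0 : ℝ)..(2 * Real.pi),
          ((inner ℝ g (zsig τ) : ℝ) -
            h / (h ^ 2 + ω ^ 2) *
              (h * (inner ℝ g (zsig τ) : ℝ) - ω * (inner ℝ g (wsig τ) : ℝ))) • zsig τ =
      (ω / (2 * (h ^ 2 + ω ^ 2))) • (ω • g + h • Jmap g) :=
  averaged_extremum_seeking_field_general h ω hω g
end
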